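/- Fix α > 2 and ρ ∈ (0,1), and let s* be the unique maximizer over s ∈ [0,1] of ρ·s + √((1−ρ²)·g_α(s)), and r* = r_α(s*). If ρ > ρ_c(α) := √(1 − (π/α)/tan(π/α)), then s* = 1, r* = 0, and 1 + (s*)² + (r*)² − 2|s*| = 0. If ρ < ρ_c(α), then s* < 1 and 1 + (s*)² + (r*)² − 2|s*| > 0. -/

import Mathlib

/-- `c_α = 1/tan(π/α)`. -/
noncomputable def cAlpha (α : ℝ) : ℝ := 1 / Real.tan (Real.pi / α)

/-- `r_α(s) = √(c_α² + 1 − s²) − c_α`. -/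
noncomputable def rAlpha (α s : ℝ) : ℝ :=
  Real.sqrt (cAlpha α ^ 2 + 1 - s ^ 2) - cAlpha α

/-- `g_α(s) = −1 − s² + (2α/π)·r_α(s) + (2αs/π)·arctan(s/(r_α(s) + c_α))`. -/
noncomputable def gAlpha (α s : ℝ) : ℝ :=
  -1 - s ^ 2 + 2 * α * rAlpha α s / Real.pi
    + 2 * α * s / Real.pi * Real.arctan (s / (rAlpha α s + cAlpha α))

/-
Write `q(s) = r_α(s) + c_α = √(c_α² + 1 − s²)`. Then `(arctan (s/q))' = 1/q`, so
`g_α'(s) = −2s + (2α/π)·arctan (s/q(s))`, and `g_α(1) = 0` because `arctan (1/c_α) = π/α`.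
Comparing derivatives from the right endpoint `s = 1`, and using `c_α ≤ q(s) ≤ q(t)` for
`0 ≤ t ≤ s ≤ 1`, gives the quadratic bounds
`(α/(π q(t)) − 1)(1−t)² ≤ g_α(t) ≤ (α/(π c_α) − 1)(1−t)²`.
Since `ρ_c² = 1 − π c_α/α`, for `ρ > ρ_c` the upper bound yields `√((1−ρ²) g_α(s)) ≤ ρ(1−s)`,
so `s = 1` is a maximizer, hence the maximizer. For `ρ < ρ_c` the lower bound at a `t < 1` close
to `1` (where `q(t)` is close to `c_α`) yields `√((1−ρ²) g_α(t)) > ρ(1−t)`, so `1` is not a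
maximizer.
-/

open Real Set Filter Topology

lemma le_of_hasDerivAt_le_of_le_right {l u l' u' : ℝ → ℝ} {a b x : ℝ}
    (hl : ∀ y ∈ Icc a b, HasDerivAt l (l' y) y) (hu : ∀ y ∈ Icc a b, HasDerivAt u (u' y) y)
    (hderiv : ∀ y ∈ Ioo a b, u' y ≤ l' y) (hb : l b ≤ u b) (hx : x ∈ Icc a b) :
    l x ≤ u x := by
  have hmono : MonotoneOn (fun y => l y - u y) (Icc a b) := by
    refine monotoneOn_of_hasDerivWithinAt_nonneg (convex_Icc a b) (f' := fun y => l' y - u' y)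
      (fun y hy => ((hl y hy).sub (hu y hy)).continuousAt.continuousWithinAt)
      (fun y hy => ?_) (fun y hy => ?_) <;> rw [interior_Icc] at hy
    · exact ((hl y (Ioo_subset_Icc_self hy)).sub (hu y (Ioo_subset_Icc_self hy))).hasDerivWithinAt
    · exact sub_nonneg.mpr (hderiv y hy)
  have := hmono hx (right_mem_Icc.mpr (hx.1.trans hx.2)) hx.2
  simp only at this
  linarith

noncomputable def qAlpha (α s : ℝ) : ℝ := √(cAlpha α ^ 2 + 1 - s ^ 2)

section

variable {α s t : ℝ}

lemma rAlpha_add_cAlpha : rAlpha α s + cAlpha α = qAlpha α s := sub_add_cancel _ _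

lemma cAlpha_pos (hα : 2 < α) : 0 < cAlpha α := by
  have h0 : 0 < π / α := by positivity
  have h1 : π / α < π / 2 := div_lt_div_of_pos_left pi_pos (by norm_num) hα
  rw [cAlpha]
  exact one_div_pos.mpr (tan_pos_of_pos_of_lt_pi_div_two h0 h1)

lemma arctan_one_div_cAlpha (hα : 2 < α) : arctan (1 / cAlpha α) = π / α := by
  have h1 : π / α < π / 2 := div_lt_div_of_pos_left pi_pos (by norm_num) hα
  rw [cAlpha, one_div_one_div]
  exact arctan_tan (by linarith [show 0 < π / α by positivity]) h1

lemma qAlpha_one (hc : 0 ≤ cAlpha α) : qAlpha α 1 = cAlpha α := by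
  rw [qAlpha, one_pow, add_sub_cancel_right, sqrt_sq hc]

lemma rAlpha_one (hc : 0 ≤ cAlpha α) : rAlpha α 1 = 0 := by
  rw [rAlpha, one_pow, add_sub_cancel_right, sqrt_sq hc, sub_self]

lemma qAlpha_pos (hs : s ^ 2 < cAlpha α ^ 2 + 1) : 0 < qAlpha α s :=
  sqrt_pos.mpr (by linarith)

lemma qAlpha_le_qAlpha (ht : 0 ≤ t) (hts : t ≤ s) : qAlpha α s ≤ qAlpha α t :=
  sqrt_le_sqrt (by nlinarith)

lemma hasDerivAt_qAlpha (hs : s ^ 2 < cAlpha α ^ 2 + 1) :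
    HasDerivAt (qAlpha α) (-s / qAlpha α s) s := by
  have hu : HasDerivAt (fun s : ℝ => cAlpha α ^ 2 + 1 - s ^ 2) (-(2 * s)) s := by
    simpa using (hasDerivAt_pow 2 s).const_sub (cAlpha α ^ 2 + 1)
  refine (hu.sqrt (by linarith)).congr_deriv ?_
  unfold qAlpha
  field_simp

lemma hasDerivAt_arctan_div_qAlpha (hs : s ^ 2 < cAlpha α ^ 2 + 1) :
    HasDerivAt (fun s => arctan (s / qAlpha α s)) (1 / qAlpha α s) s := by
  have hq := qAlpha_pos hs
  have hq2 : qAlpha α s ^ 2 = cAlpha α ^ 2 + 1 - s ^ 2 := sq_sqrt (by linarith)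
  refine ((hasDerivAt_id' s).div (hasDerivAt_qAlpha hs) hq.ne').arctan.congr_deriv ?_
  simp only [Pi.div_apply]
  field_simp
  rw [hq2]
  ring

lemma hasDerivAt_gAlpha (hs : s ^ 2 < cAlpha α ^ 2 + 1) :
    HasDerivAt (gAlpha α) (-2 * s + 2 * α / π * arctan (s / qAlpha α s)) s := by
  have hg : gAlpha α = fun s => -1 - s ^ 2 + 2 * α * (qAlpha α s - cAlpha α) / π
      + 2 * α * s / π * arctan (s / qAlpha α s) := by
    funext s
    rw [gAlpha, rAlpha_add_cAlpha]
    rfl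
  rw [hg]
  refine ((((hasDerivAt_pow 2 s).const_sub (-1)).add
    ((((hasDerivAt_qAlpha hs).sub_const (cAlpha α)).const_mul (2 * α)).div_const π)).add
    ((((hasDerivAt_id' s).const_mul (2 * α)).div_const π).mul
      (hasDerivAt_arctan_div_qAlpha hs))).congr_deriv ?_
  field_simp
  ring

lemma gAlpha_one (hα : 2 < α) : gAlpha α 1 = 0 := by
  have hc := (cAlpha_pos hα).le
  have hα0 : α ≠ 0 := by positivity
  rw [gAlpha, rAlpha_one hc, zero_add, arctan_one_div_cAlpha hα]
  field_simp
  ring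

lemma sq_lt_cAlpha_sq_add_one (hα : 2 < α) (h0 : 0 ≤ s) (h1 : s ≤ 1) :
    s ^ 2 < cAlpha α ^ 2 + 1 := by
  nlinarith [cAlpha_pos hα, mul_le_mul h1 h1 h0 zero_le_one]

lemma sub_div_cAlpha_le_arctan (hα : 2 < α) (hs : s ∈ Icc 0 1) :
    π / α - (1 - s) / cAlpha α ≤ arctan (s / qAlpha α s) := by
  have hc := cAlpha_pos hα
  refine le_of_hasDerivAt_le_of_le_right (l := fun y => π / α - (1 - y) / cAlpha α)
    (l' := fun _ => 1 / cAlpha α) (u' := fun y => 1 / qAlpha α y)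
    (fun y _ => ?_)
    (fun y hy => hasDerivAt_arctan_div_qAlpha (sq_lt_cAlpha_sq_add_one hα hy.1 hy.2))
    (fun y hy => ?_) ?_ hs
  · exact (((hasDerivAt_id' y).const_sub 1).div_const _ |>.const_sub (π / α)).congr_deriv (by ring)
  · exact one_div_le_one_div_of_le hc (qAlpha_one hc.le ▸ qAlpha_le_qAlpha hy.1.le hy.2.le)
  · rw [qAlpha_one hc.le, arctan_one_div_cAlpha hα]
    simp

lemma arctan_le_sub_div_qAlpha (hα : 2 < α) (ht : 0 ≤ t) (hs : s ∈ Icc t 1) :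
    arctan (s / qAlpha α s) ≤ π / α - (1 - s) / qAlpha α t := by
  have hc := cAlpha_pos hα
  refine le_of_hasDerivAt_le_of_le_right (u := fun y => π / α - (1 - y) / qAlpha α t)
    (l' := fun y => 1 / qAlpha α y) (u' := fun _ => 1 / qAlpha α t)
    (fun y hy => hasDerivAt_arctan_div_qAlpha (sq_lt_cAlpha_sq_add_one hα (ht.trans hy.1) hy.2))
    (fun y _ => ?_) (fun y hy => ?_) ?_ hs
  · exact (((hasDerivAt_id' y).const_sub 1).div_const _ |>.const_sub (π / α)).congr_deriv (by ring)
  · have hq := qAlpha_pos (α := α) (sq_lt_cAlpha_sq_add_one hα (ht.trans hy.1.le) hy.2.le)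
    exact one_div_le_one_div_of_le hq (qAlpha_le_qAlpha ht hy.1.le)
  · rw [qAlpha_one hc.le, arctan_one_div_cAlpha hα]
    simp

lemma hasDerivAt_mul_one_sub_sq (K y : ℝ) :
    HasDerivAt (fun y => K * (1 - y) ^ 2) (-(2 * K * (1 - y))) y :=
  ((((hasDerivAt_id' y).const_sub 1).pow 2).const_mul K).congr_deriv (by simp; ring)

lemma two_mul_div_pi_mul_sub (hα : α ≠ 0) (d y : ℝ) :
    2 * α / π * (π / α - (1 - y) / d) = -(2 * (α / (π * d) - 1) * (1 - y)) + 2 * y := by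
  rw [mul_sub, show 2 * α / π * (π / α) = 2 by field_simp]
  ring

lemma gAlpha_le_of_sub_div_le_arctan (hα : 2 < α) (ht : 0 ≤ t) {d : ℝ}
    (hd : ∀ y ∈ Ioo t 1, π / α - (1 - y) / d ≤ arctan (y / qAlpha α y)) (hs : s ∈ Icc t 1) :
    gAlpha α s ≤ (α / (π * d) - 1) * (1 - s) ^ 2 := by
  have hα0 : 0 < α := by linarith
  refine le_of_hasDerivAt_le_of_le_right
    (fun y hy => hasDerivAt_gAlpha (sq_lt_cAlpha_sq_add_one hα (ht.trans hy.1) hy.2))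
    (fun y _ => hasDerivAt_mul_one_sub_sq _ y) (fun y hy => ?_) (by simp [gAlpha_one hα]) hs
  have h := mul_le_mul_of_nonneg_left (hd y hy) (by positivity : 0 ≤ 2 * α / π)
  linarith [two_mul_div_pi_mul_sub hα0.ne' d y]

lemma le_gAlpha_of_arctan_le_sub_div (hα : 2 < α) (ht : 0 ≤ t) {d : ℝ}
    (hd : ∀ y ∈ Ioo t 1, arctan (y / qAlpha α y) ≤ π / α - (1 - y) / d) (hs : s ∈ Icc t 1) :
    (α / (π * d) - 1) * (1 - s) ^ 2 ≤ gAlpha α s := by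
  have hα0 : 0 < α := by linarith
  refine le_of_hasDerivAt_le_of_le_right (fun y _ => hasDerivAt_mul_one_sub_sq _ y)
    (fun y hy => hasDerivAt_gAlpha (sq_lt_cAlpha_sq_add_one hα (ht.trans hy.1) hy.2))
    (fun y hy => ?_) (by simp [gAlpha_one hα]) hs
  have h := mul_le_mul_of_nonneg_left (hd y hy) (by positivity : 0 ≤ 2 * α / π)
  linarith [two_mul_div_pi_mul_sub hα0.ne' d y]

end

lemma isMaxOn_one_of_mul_le_sq {ρ : ℝ} {g : ℝ → ℝ} (hρ : 0 ≤ ρ) (hg1 : g 1 = 0)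
    (h : ∀ s ∈ Icc (0 : ℝ) 1, (1 - ρ ^ 2) * g s ≤ (ρ * (1 - s)) ^ 2) :
    IsMaxOn (fun s => ρ * s + √((1 - ρ ^ 2) * g s)) (Icc 0 1) 1 := by
  refine isMaxOn_iff.mpr fun s hs => ?_
  have := (sqrt_le_left (mul_nonneg hρ (sub_nonneg.mpr hs.2))).mpr (h s hs)
  simp only [hg1, mul_zero, sqrt_zero, add_zero, mul_one]
  linarith

lemma lt_of_sq_lt_mul {ρ t : ℝ} {g : ℝ → ℝ} (hρ : 0 ≤ ρ) (ht : t ≤ 1) (hg1 : g 1 = 0)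
    (h : (ρ * (1 - t)) ^ 2 < (1 - ρ ^ 2) * g t) :
    ρ * 1 + √((1 - ρ ^ 2) * g 1) < ρ * t + √((1 - ρ ^ 2) * g t) := by
  have := (lt_sqrt (mul_nonneg hρ (sub_nonneg.mpr ht))).mpr h
  rw [hg1, mul_zero, sqrt_zero, add_zero]
  linarith

section

variable {α ρ : ℝ}

lemma mul_gAlpha_le_sq (hα : 2 < α) (hρ : ρ ^ 2 ≤ 1) (hcrit : 1 - π / α * cAlpha α < ρ ^ 2)
    {s : ℝ} (hs : s ∈ Icc 0 1) : (1 - ρ ^ 2) * gAlpha α s ≤ (ρ * (1 - s)) ^ 2 := by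
  have hc := cAlpha_pos hα
  have hg := gAlpha_le_of_sub_div_le_arctan hα le_rfl
    (fun y hy => sub_div_cAlpha_le_arctan hα (Ioo_subset_Icc_self hy)) hs
  have hK : (1 - ρ ^ 2) * (α / (π * cAlpha α)) ≤ 1 := by
    rw [← le_div_iff₀ (by positivity), one_div_div]
    linarith [show π * cAlpha α / α = π / α * cAlpha α by ring]
  calc (1 - ρ ^ 2) * gAlpha α s ≤ (1 - ρ ^ 2) * ((α / (π * cAlpha α) - 1) * (1 - s) ^ 2) :=
        mul_le_mul_of_nonneg_left hg (sub_nonneg.mpr hρ)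
    _ ≤ ρ ^ 2 * (1 - s) ^ 2 := by nlinarith [sq_nonneg (1 - s)]
    _ = (ρ * (1 - s)) ^ 2 := by ring

lemma exists_sq_lt_mul_gAlpha (hα : 2 < α) (hcrit : ρ ^ 2 < 1 - π / α * cAlpha α) :
    ∃ t ∈ Ico (0 : ℝ) 1, (ρ * (1 - t)) ^ 2 < (1 - ρ ^ 2) * gAlpha α t := by
  have hc := cAlpha_pos hα
  have hα0 : 0 < α := by linarith
  have hcα : cAlpha α < (1 - ρ ^ 2) * α / π := by
    have h : π * cAlpha α / α < 1 - ρ ^ 2 := by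
      rwa [div_mul_eq_mul_div, lt_sub_comm] at hcrit
    rw [div_lt_iff₀ hα0] at h
    rw [lt_div_iff₀ pi_pos]
    linarith
  have hlim : Tendsto (qAlpha α) (𝓝[<] 1) (𝓝 (cAlpha α)) := by
    rw [← qAlpha_one hc.le]
    exact ((continuous_const.sub (continuous_pow 2)).sqrt.tendsto 1).mono_left nhdsWithin_le_nhds
  obtain ⟨t, hqt, ht⟩ :=
    ((hlim.eventually (gt_mem_nhds hcα)).and (Ioo_mem_nhdsLT zero_lt_one)).exists
  refine ⟨t, ⟨ht.1.le, ht.2⟩, ?_⟩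
  have hg := le_gAlpha_of_arctan_le_sub_div hα ht.1.le
    (fun y hy => arctan_le_sub_div_qAlpha hα ht.1.le (Ioo_subset_Icc_self hy))
    (left_mem_Icc.mpr ht.2.le)
  have hq := qAlpha_pos (sq_lt_cAlpha_sq_add_one hα ht.1.le ht.2.le)
  have hM : 1 < (1 - ρ ^ 2) * (α / (π * qAlpha α t)) := by
    rw [← mul_div_assoc, one_lt_div (by positivity)]
    rwa [lt_div_iff₀ pi_pos, mul_comm] at hqt
  have hρ : 0 ≤ 1 - ρ ^ 2 := by linarith [show 0 < π / α * cAlpha α by positivity]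
  calc (ρ * (1 - t)) ^ 2 = ρ ^ 2 * (1 - t) ^ 2 := by ring
    _ < (1 - ρ ^ 2) * ((α / (π * qAlpha α t) - 1) * (1 - t) ^ 2) := by
        nlinarith [pow_pos (sub_pos.mpr ht.2) 2]
    _ ≤ (1 - ρ ^ 2) * gAlpha α t := mul_le_mul_of_nonneg_left hg hρ

end

/-- Fix `α > 2` and `ρ ∈ (0,1)`, and let `s*` be the unique
maximizer over `s ∈ [0,1]` of `ρ·s + √((1−ρ²)·g_α(s))`, and `r* = r_α(s*)`.
If `ρ > ρ_c(α) := √(1 − (π/α)/tan(π/α))`, then `s* = 1`, `r* = 0`, and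
`1 + (s*)² + (r*)² − 2|s*| = 0`.  If `ρ < ρ_c(α)`, then `s* < 1` and
`1 + (s*)² + (r*)² − 2|s*| > 0`. -/
theorem phaseMax_scalar_solution_phase_transition (α ρ : ℝ) (hα : 2 < α)
    (hρ : ρ ∈ Set.Ioo (0 : ℝ) 1) (sstar : ℝ) (hs : sstar ∈ Set.Icc (0 : ℝ) 1)
    (hmax : IsMaxOn (fun s : ℝ => ρ * s + Real.sqrt ((1 - ρ ^ 2) * gAlpha α s))
      (Set.Icc 0 1) sstar)
    (huniq : ∀ s ∈ Set.Icc (0 : ℝ) 1,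
      IsMaxOn (fun s : ℝ => ρ * s + Real.sqrt ((1 - ρ ^ 2) * gAlpha α s))
        (Set.Icc 0 1) s → s = sstar) :
    (ρ > Real.sqrt (1 - (Real.pi / α) / Real.tan (Real.pi / α)) →
      sstar = 1 ∧ rAlpha α sstar = 0 ∧
        1 + sstar ^ 2 + rAlpha α sstar ^ 2 - 2 * |sstar| = 0) ∧
    (ρ < Real.sqrt (1 - (Real.pi / α) / Real.tan (Real.pi / α)) →
      sstar < 1 ∧ 0 < 1 + sstar ^ 2 + rAlpha α sstar ^ 2 - 2 * |sstar|) := by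
  obtain ⟨hρ0, hρ1⟩ := hρ
  have hρc : 1 - π / α / tan (π / α) = 1 - π / α * cAlpha α := by
    rw [cAlpha, mul_one_div]
  refine ⟨fun hgt => ?_, fun hlt => ?_⟩
  · rw [hρc, gt_iff_lt, sqrt_lt' hρ0] at hgt
    have hmax1 := isMaxOn_one_of_mul_le_sq hρ0.le (gAlpha_one hα)
      fun s hs => mul_gAlpha_le_sq hα (by nlinarith) hgt hs
    obtain rfl := huniq 1 (right_mem_Icc.mpr zero_le_one) hmax1
    norm_num [rAlpha_one (cAlpha_pos hα).le]
  · rw [hρc, lt_sqrt hρ0.le] at hlt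
    obtain ⟨t, ht, hbetter⟩ := exists_sq_lt_mul_gAlpha hα hlt
    have hne : sstar ≠ 1 := by
      rintro rfl
      exact (lt_of_sq_lt_mul hρ0.le ht.2.le (gAlpha_one hα) hbetter).not_ge
        (hmax ⟨ht.1, ht.2.le⟩)
    have hlt1 : sstar < 1 := lt_of_le_of_ne hs.2 hne
    refine ⟨hlt1, ?_⟩
    rw [abs_of_nonneg hs.1]
    nlinarith [sq_nonneg (rAlpha α sstar)]
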